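/- For the potential Φ(u,σ;d) = (1/2)‖d − Hu‖_Σ² + (1/2)log(det Σ), if d₁, d₂ lie in the ball of radius r centered at the origin of ℝ^{N_d}, then |Φ(u,σ;d₁) − Φ(u,σ;d₂)| ≤ (1 + ∑_{k=1}^{N_d} σ_k^{-1/2}) (∑_{ℓ=1}^{N_d} σ_ℓ^{-1/2}) (r + C‖u‖) ‖d₁ − d₂‖, where C is any constant larger than the operator norm of H. -/

import Mathlib

/-!
The log-determinant terms cancel, so only the quadratic misfit changes with the data.
Coordinatewise `a² - b² = (a - b)(a + b)`, where `|a - b| ≤ ‖d₁ - d₂‖` and each residual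
`|d k - (H u) k|` is at most `r + C‖u‖`. This bounds the change by
`(r + C‖u‖) ‖d₁ - d₂‖ ∑ σₖ⁻¹`, and
`∑ σₖ⁻¹ = ∑ (σₖ^{-1/2})² ≤ (∑ σₖ^{-1/2})² ≤ (1 + ∑ σₖ^{-1/2}) ∑ σₖ^{-1/2}`.
-/

open Finset

lemma abs_sq_sub_sq_le {a b M : ℝ} (ha : |a| ≤ M) (hb : |b| ≤ M) :
    |a ^ 2 - b ^ 2| ≤ 2 * M * |a - b| := by
  calc |a ^ 2 - b ^ 2| = |a - b| * |a + b| := by rw [← abs_mul]; ring_nf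
    _ ≤ |a - b| * (2 * M) := by
        gcongr
        linarith [abs_add_le a b]
    _ = 2 * M * |a - b| := by ring

lemma abs_sum_sq_div_sub_sum_sq_div_le {ι : Type*} (s : Finset ι) {a b w : ι → ℝ}
    {M δ : ℝ} (hw : ∀ k ∈ s, 0 ≤ w k) (ha : ∀ k ∈ s, |a k| ≤ M) (hb : ∀ k ∈ s, |b k| ≤ M)
    (hab : ∀ k ∈ s, |a k - b k| ≤ δ) :
    |∑ k ∈ s, a k ^ 2 / w k - ∑ k ∈ s, b k ^ 2 / w k| ≤
      2 * M * δ * ∑ k ∈ s, (w k)⁻¹ := by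
  rw [← sum_sub_distrib, mul_sum]
  refine (abs_sum_le_sum_abs _ _).trans (sum_le_sum fun k hk => ?_)
  have hM : 0 ≤ M := (abs_nonneg _).trans (ha k hk)
  calc |a k ^ 2 / w k - b k ^ 2 / w k| = |a k ^ 2 - b k ^ 2| * (w k)⁻¹ := by
        rw [← sub_div, abs_div, abs_of_nonneg (hw k hk), div_eq_mul_inv]
    _ ≤ 2 * M * δ * (w k)⁻¹ := by
        gcongr
        · exact inv_nonneg.mpr (hw k hk)
        · exact (abs_sq_sub_sq_le (ha k hk) (hb k hk)).trans (by gcongr; exact hab k hk)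

lemma rpow_neg_half_sq {x : ℝ} (hx : 0 ≤ x) : (x ^ (-(1 : ℝ) / 2)) ^ 2 = x⁻¹ := by
  rw [← Real.rpow_natCast, ← Real.rpow_mul hx]
  norm_num [Real.rpow_neg_one]

lemma sum_inv_le_sq_sum_rpow_neg_half {ι : Type*} (s : Finset ι) {σ : ι → ℝ}
    (hσ : ∀ k ∈ s, 0 ≤ σ k) :
    ∑ k ∈ s, (σ k)⁻¹ ≤ (∑ k ∈ s, σ k ^ (-(1 : ℝ) / 2)) ^ 2 := by
  calc ∑ k ∈ s, (σ k)⁻¹ = ∑ k ∈ s, (σ k ^ (-(1 : ℝ) / 2)) ^ 2 :=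
        sum_congr rfl fun k hk => (rpow_neg_half_sq (hσ k hk)).symm
    _ ≤ _ := sum_sq_le_sq_sum_of_nonneg fun k hk => Real.rpow_nonneg (hσ k hk) _

lemma abs_apply_sub_apply_le {n : ℕ} {Hu : Type*} [NormedAddCommGroup Hu] [NormedSpace ℝ Hu]
    (H : Hu →L[ℝ] EuclideanSpace ℝ (Fin n)) {C r : ℝ} (hC : ‖H‖ ≤ C) (u : Hu)
    {d : EuclideanSpace ℝ (Fin n)} (hd : ‖d‖ ≤ r) (k : Fin n) :
    |d k - H u k| ≤ r + C * ‖u‖ := by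
  calc |d k - H u k| ≤ ‖d‖ + ‖H u‖ :=
        (abs_sub _ _).trans (add_le_add (PiLp.norm_apply_le d k) (PiLp.norm_apply_le (H u) k))
    _ ≤ r + C * ‖u‖ := add_le_add hd (H.le_of_opNorm_le hC u)

/-- Lipschitz continuity of the potential in the data: for d₁, d₂ in the ball
of radius r, |Φ(u,σ;d₁) − Φ(u,σ;d₂)| ≤ (1 + ∑ σ_k^{-1/2})(∑ σ_ℓ^{-1/2})(r + C‖u‖)‖d₁ − d₂‖,
where C is any constant larger than the operator norm of H. -/
theorem stmt1 {Hu : Type*} [NormedAddCommGroup Hu] [InnerProductSpace ℝ Hu]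
    (Nd : ℕ)
    (H : Hu →L[ℝ] EuclideanSpace ℝ (Fin Nd))
    (C : ℝ) (hC : ‖H‖ < C)
    (u : Hu) (σ : Fin Nd → ℝ) (hσ : ∀ k, 0 < σ k)
    (r : ℝ) (d₁ d₂ : EuclideanSpace ℝ (Fin Nd))
    (hd₁ : ‖d₁‖ < r) (hd₂ : ‖d₂‖ < r) :
    |((1/2 : ℝ) * (∑ k, (d₁ k - H u k) ^ 2 / σ k) + (1/2 : ℝ) * Real.log (∏ k, σ k))
      - ((1/2 : ℝ) * (∑ k, (d₂ k - H u k) ^ 2 / σ k) + (1/2 : ℝ) * Real.log (∏ k, σ k))| ≤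
      (1 + ∑ k, (σ k) ^ (-(1:ℝ)/2)) * (∑ l, (σ l) ^ (-(1:ℝ)/2)) * (r + C * ‖u‖)
        * ‖d₁ - d₂‖ := by
  set S := ∑ k, (σ k) ^ (-(1:ℝ)/2)
  set M := r + C * ‖u‖
  have hS : 0 ≤ S := sum_nonneg fun k _ => Real.rpow_nonneg (hσ k).le _
  have hM : 0 ≤ M := add_nonneg ((norm_nonneg _).trans hd₁.le)
    (mul_nonneg ((norm_nonneg _).trans hC.le) (norm_nonneg _))
  have hmisfit := abs_sum_sq_div_sub_sum_sq_div_le univ (w := σ) (δ := ‖d₁ - d₂‖)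
    (fun k _ => (hσ k).le) (fun k _ => abs_apply_sub_apply_le H hC.le u hd₁.le k)
    (fun k _ => abs_apply_sub_apply_le H hC.le u hd₂.le k)
    (fun k _ => by simpa using PiLp.norm_apply_le (d₁ - d₂) k)
  have hinv := sum_inv_le_sq_sum_rpow_neg_half univ fun k _ => (hσ k).le
  calc _ = |(1/2 : ℝ) * (∑ k, (d₁ k - H u k) ^ 2 / σ k - ∑ k, (d₂ k - H u k) ^ 2 / σ k)| := by
        congr 1; ring
    _ = (1/2 : ℝ) * |∑ k, (d₁ k - H u k) ^ 2 / σ k - ∑ k, (d₂ k - H u k) ^ 2 / σ k| := by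
        rw [abs_mul, abs_of_pos one_half_pos]
    _ ≤ (1/2 : ℝ) * (2 * M * ‖d₁ - d₂‖ * S ^ 2) := by
        gcongr
        exact hmisfit.trans (by gcongr)
    _ = S * S * (M * ‖d₁ - d₂‖) := by ring
    _ ≤ (1 + S) * S * (M * ‖d₁ - d₂‖) := by gcongr; linarith
    _ = (1 + S) * S * M * ‖d₁ - d₂‖ := by ring
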